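/- arXiv:1907.11777 — 5 statements merged into one kernel-verified Lean document; each statement's English description precedes it below -/
import Mathlib

section
/- If a doubly regular tournament on 4k+3 vertices exists, then the tournament obtained by deleting one vertex is near-regular, with exactly 2k+1 vertices of out-degree 2k and 2k+1 vertices of out-degree 2k+1. -/
open Finset

/-- A tournament on vertex set `V`: an orientation of the complete graph.
`r x y` means `x` dominates `y` (the arc `(x,y)` is present). -/
structure Tournament (V : Type*) where
  r : V → V → Bool
  irrefl : ∀ x, r x x = false
  total : ∀ x y, x ≠ y → r x y = !r y x

variable {V : Type*}

/-- Out-neighborhood `v(x)`. -/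
def Tournament.outSet [Fintype V] (T : Tournament V) (x : V) : Finset V :=
  univ.filter fun y => T.r x y = true

/-- In-neighborhood `f(x)`. -/
def Tournament.inSet [Fintype V] (T : Tournament V) (x : V) : Finset V :=
  univ.filter fun y => T.r y x = true

/-- Out-degree `d⁺(x)`. -/
def Tournament.outDeg [Fintype V] (T : Tournament V) (x : V) : ℕ :=
  (T.outSet x).card

/-- In-degree `d⁻(x)`. -/
def Tournament.inDeg [Fintype V] (T : Tournament V) (x : V) : ℕ :=
  (T.inSet x).card

/-- Number of separators `Δ(x,y) = |v(x)∩f(y)| + |f(x)∩v(y)|`. -/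
def Tournament.sep [Fintype V] [DecidableEq V] (T : Tournament V) (x y : V) : ℕ :=
  (T.outSet x ∩ T.inSet y).card + (T.inSet x ∩ T.outSet y).card

/-- `I` is a module of `T` if every vertex outside `I` relates uniformly to `I`. -/
def Tournament.IsModule [Fintype V] (T : Tournament V) (I : Finset V) : Prop :=
  ∀ x ∉ I, (∀ y ∈ I, T.r x y = true) ∨ (∀ y ∈ I, T.r y x = true)

/-- A tournament is simple if all its modules are trivial. -/
def Tournament.IsSimple [Fintype V] (T : Tournament V) : Prop :=
  ∀ I : Finset V, T.IsModule I → I.card ≤ 1 ∨ I = univ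

/-- The number of arcs of `T` that are reversed in `T'`. -/
def Tournament.dist [Fintype V] (T T' : Tournament V) : ℕ :=
  (univ.filter fun p : V × V => T.r p.1 p.2 = true ∧ T'.r p.1 p.2 = false).card

/-- Arrow-simplicity: the least number of arcs whose reversal yields a
non-simple tournament. -/
noncomputable def Tournament.simplicity [Fintype V] (T : Tournament V) : ℕ :=
  sInf {m : ℕ | ∃ T' : Tournament V, ¬ T'.IsSimple ∧ T.dist T' = m}

/-- Subtournament induced on a finset of vertices. -/
def Tournament.sub (T : Tournament V) (s : Finset V) : Tournament {x // x ∈ s} where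
  r a b := T.r a b
  irrefl a := T.irrefl a
  total a b h := T.total a b fun e => h (Subtype.ext e)

/-- The relation obtained from `T` by reversing the orientation between `x` and `y`
whenever `g x y` holds. -/
def Tournament.flipRel (T : Tournament V) (g : V → V → Bool) (x y : V) : Bool :=
  if g x y = true then !T.r x y else T.r x y

lemma pair_sum [Fintype V] [DecidableEq V] (T : Tournament V) (N : Finset V) :
    2 * ∑ y ∈ N, (N.filter fun z => T.r y z = true).card = N.card * (N.card - 1) := by
  have hterm : ∀ y ∈ N, ∀ z ∈ N,
      ((if T.r y z = true then (1:ℕ) else 0) + (if T.r z y = true then 1 else 0))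
        = if y = z then 0 else 1 := by
    intro y _ z _
    by_cases h : y = z
    · subst h; simp [T.irrefl]
    · have ht := T.total y z h
      cases hr : T.r z y <;> simp [ht, hr, h]
  have hrow : ∀ y ∈ N, ∑ z ∈ N, (if y = z then (0:ℕ) else 1) = N.card - 1 := by
    intro y hy
    rw [← Finset.add_sum_erase N _ hy]
    simp only [if_pos rfl, zero_add]
    rw [Finset.sum_congr rfl (fun z hz => if_neg (Finset.ne_of_mem_erase hz).symm)]
    simp [Finset.card_erase_of_mem hy]
  have h2 : ∑ y ∈ N, ∑ z ∈ N,
      ((if T.r y z = true then (1:ℕ) else 0) + (if T.r z y = true then 1 else 0))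
      = N.card * (N.card - 1) := by
    rw [Finset.sum_congr rfl fun y hy => Finset.sum_congr rfl fun z hz => hterm y hy z hz]
    rw [Finset.sum_congr rfl hrow, Finset.sum_const, smul_eq_mul]
  have hsplit : ∑ y ∈ N, ∑ z ∈ N,
      ((if T.r y z = true then (1:ℕ) else 0) + (if T.r z y = true then 1 else 0))
      = 2 * ∑ y ∈ N, ∑ z ∈ N, (if T.r y z = true then (1:ℕ) else 0) := by
    simp only [Finset.sum_add_distrib, two_mul]
    congr 1
    exact Finset.sum_comm
  have hcardf : ∀ y, (N.filter fun z => T.r y z = true).card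
      = ∑ z ∈ N, (if T.r y z = true then (1:ℕ) else 0) := fun y => Finset.card_filter _ _
  rw [Finset.sum_congr rfl fun y _ => hcardf y]
  rw [← hsplit, h2]

lemma regular [Fintype V] [DecidableEq V] (k : ℕ) (T : Tournament V)
    (hcard : Fintype.card V = 4 * k + 3)
    (hdr : ∀ x y : V, x ≠ y → (T.outSet x ∩ T.outSet y).card = k) :
    ∀ x, T.outDeg x = 2 * k + 1 := by
  have key : ∀ x : V, T.outDeg x = 0 ∨ T.outDeg x = 2 * k + 1 := by
    intro x
    set N := T.outSet x with hN
    have hx : x ∉ N := by simp [hN, Tournament.outSet, T.irrefl]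
    have hk : ∀ y ∈ N, (N.filter fun z => T.r y z = true).card = k := by
      intro y hy
      have hxy : x ≠ y := fun h => hx (h ▸ hy)
      have : N.filter (fun z => T.r y z = true) = T.outSet x ∩ T.outSet y := by
        ext z; simp [hN, Tournament.outSet, and_comm]
      rw [this, hdr x y hxy]
    have hp := pair_sum T N
    rw [Finset.sum_congr rfl hk, Finset.sum_const, smul_eq_mul] at hp
    rcases Nat.eq_zero_or_pos N.card with h0 | hpos
    · left; exact h0
    · right
      show N.card = 2 * k + 1
      have : N.card * (2 * k) = N.card * (N.card - 1) := by ring_nf; ring_nf at hp; omega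
      have := Nat.eq_of_mul_eq_mul_left hpos this
      omega
  -- global sum
  have hglob := pair_sum T (univ : Finset V)
  have : ∀ y : V, ((univ : Finset V).filter fun z => T.r y z = true).card = T.outDeg y := by
    intro y; rfl
  rw [Finset.sum_congr rfl fun y _ => this y, Finset.card_univ, hcard] at hglob
  -- split by zero degrees
  classical
  set Z := univ.filter (fun x : V => T.outDeg x = 0) with hZ
  have hsplit := Finset.sum_filter_add_sum_filter_not univ (fun x : V => T.outDeg x = 0)
      (fun x => T.outDeg x)
  have hz0 : ∑ x ∈ Z, T.outDeg x = 0 := by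
    apply Finset.sum_eq_zero; intro x hx; exact (Finset.mem_filter.mp hx).2
  have hnz : ∑ x ∈ univ.filter (fun x : V => ¬ T.outDeg x = 0), T.outDeg x
      = (univ.filter (fun x : V => ¬ T.outDeg x = 0)).card * (2 * k + 1) := by
    rw [Finset.sum_congr rfl (fun x hx => ?_), Finset.sum_const, smul_eq_mul]
    rcases key x with h | h
    · exact absurd h (Finset.mem_filter.mp hx).2
    · exact h
  have hcards : Z.card + (univ.filter (fun x : V => ¬ T.outDeg x = 0)).card = 4 * k + 3 := by
    rw [Finset.card_filter_add_card_filter_not, Finset.card_univ, hcard]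
  have hA : (univ.filter (fun x : V => ¬ T.outDeg x = 0)).card = 4 * k + 3 := by
    rw [hz0, hnz] at hsplit
    rw [← hsplit] at hglob
    have h2 : (univ.filter (fun x : V => ¬ T.outDeg x = 0)).card * (4 * k + 2)
        = (4 * k + 3) * (4 * k + 2) := by
      have e : (univ.filter (fun x : V => ¬ T.outDeg x = 0)).card * (4 * k + 2)
          = 2 * (0 + (univ.filter (fun x : V => ¬ T.outDeg x = 0)).card * (2 * k + 1)) := by
        ring
      rw [e, hglob]
      have e2 : 4 * k + 3 - 1 = 4 * k + 2 := by omega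
      rw [e2]
    exact Nat.eq_of_mul_eq_mul_right (by omega) h2
  have hZ0 : Z.card = 0 := by omega
  intro x
  rcases key x with h | h
  · exfalso
    have : x ∈ Z := Finset.mem_filter.mpr ⟨Finset.mem_univ x, h⟩
    have := Finset.card_pos.mpr ⟨x, this⟩
    omega
  · exact h

lemma card_filter_subtype [Fintype V] [DecidableEq V] (s : Finset V) (p : V → Prop)
    [DecidablePred p] :
    ((univ : Finset {x // x ∈ s}).filter fun x => p x.1).card = (s.filter p).card := by
  apply Finset.card_bij (fun (a : {x // x ∈ s}) _ => a.1)
  · intro a ha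
    simp only [Finset.mem_filter] at ha ⊢
    exact ⟨a.2, ha.2⟩
  · intro a _ b _ h
    exact Subtype.ext h
  · intro b hb
    simp only [Finset.mem_filter] at hb
    exact ⟨⟨b, hb.1⟩, by simp [hb.2], rfl⟩

lemma sub_outDeg [Fintype V] [DecidableEq V] (T : Tournament V) (s : Finset V)
    (x : {y // y ∈ s}) :
    (T.sub s).outDeg x = (s.filter fun y => T.r x.1 y = true).card := by
  rw [Tournament.outDeg, Tournament.outSet]
  exact card_filter_subtype s (fun y => T.r x.1 y = true)


/-- Deleting one vertex from a doubly regular tournament on `4k+3` vertices yields a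
near-regular tournament with exactly `2k+1` vertices of out-degree `2k` and `2k+1`
vertices of out-degree `2k+1`. -/
theorem stmt_10 {V : Type*} [Fintype V] [DecidableEq V] (k : ℕ) (T : Tournament V)
    (hcard : Fintype.card V = 4 * k + 3)
    (hdr : ∀ x y : V, x ≠ y → (T.outSet x ∩ T.outSet y).card = k)
    (w : V) :
    (∃ m : ℕ, 0 < m ∧ ∀ x, (T.sub (univ.erase w)).outDeg x = m ∨
        (T.sub (univ.erase w)).outDeg x = m - 1) ∧
    (univ.filter fun x => (T.sub (univ.erase w)).outDeg x = 2 * k).card = 2 * k + 1 ∧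
    (univ.filter fun x => (T.sub (univ.erase w)).outDeg x = 2 * k + 1).card
      = 2 * k + 1 := by
  have hreg := regular k T hcard hdr
  set s : Finset V := univ.erase w with hs
  -- degree formula in the subtournament
  have hdeg : ∀ x : {y // y ∈ s},
      (T.sub s).outDeg x = if T.r x.1 w = true then 2 * k else 2 * k + 1 := by
    intro x
    rw [sub_outDeg]
    have : s.filter (fun y => T.r x.1 y = true) = (T.outSet x.1).erase w := by
      show (Finset.univ.erase w).filter (fun y => T.r x.1 y = true) = (T.outSet x.1).erase w
      rw [Finset.filter_erase]
      rfl
    rw [this]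
    by_cases h : T.r x.1 w = true
    · have hw : w ∈ T.outSet x.1 := by simp [Tournament.outSet, h]
      rw [if_pos h, Finset.card_erase_of_mem hw]
      have := hreg x.1
      rw [Tournament.outDeg] at this
      omega
    · have hw : w ∉ T.outSet x.1 := by simp [Tournament.outSet, h]
      rw [if_neg h, Finset.erase_eq_of_notMem hw]
      exact hreg x.1
  have hne : ∀ x : {y // y ∈ s}, x.1 ≠ w := fun x => Finset.ne_of_mem_erase x.2
  have hscard : s.card = 4 * k + 2 := by
    show (Finset.univ.erase w).card = 4 * k + 2
    rw [Finset.card_erase_of_mem (Finset.mem_univ w), Finset.card_univ, hcard]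
    omega
  have hsout : (s.filter fun y => ¬ T.r y w = true).card = 2 * k + 1 := by
    have h1 : s.filter (fun y => ¬ T.r y w = true) = T.outSet w := by
      ext y
      show y ∈ (Finset.univ.erase w).filter (fun y => ¬ T.r y w = true) ↔ _
      simp only [Finset.mem_filter, Finset.mem_erase, Finset.mem_univ, true_and,
        Tournament.outSet, and_true]
      constructor
      · rintro ⟨hyw, hr⟩
        have := T.total w y (Ne.symm hyw)
        cases hr2 : T.r y w
        · rw [this, hr2]; rfl
        · exact absurd hr2 hr
      · intro hr
        have hyw : y ≠ w := by
          intro h; subst h; rw [T.irrefl] at hr; exact Bool.false_ne_true hr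
        refine ⟨hyw, ?_⟩
        have := T.total y w hyw
        rw [this, hr]
        simp
    rw [h1]
    exact hreg w
  have hsin : (s.filter fun y => T.r y w = true).card = 2 * k + 1 := by
    have := Finset.card_filter_add_card_filter_not (s := s)
      (p := fun y => T.r y w = true)
    omega
  refine ⟨⟨2 * k + 1, by omega, fun x => ?_⟩, ?_, ?_⟩
  · rw [hdeg x]
    by_cases h : T.r x.1 w = true
    · right; rw [if_pos h]; omega
    · left; rw [if_neg h]
  · have hfe : (univ.filter fun x : {y // y ∈ s} => (T.sub s).outDeg x = 2 * k)
        = univ.filter fun x : {y // y ∈ s} => T.r x.1 w = true := by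
      ext x
      simp only [Finset.mem_filter, Finset.mem_univ, true_and, hdeg x]
      by_cases h : T.r x.1 w = true
      · simp [h]
      · simp [h]
    rw [hfe, card_filter_subtype s (fun y => T.r y w = true)]
    exact hsin
  · have hfe : (univ.filter fun x : {y // y ∈ s} => (T.sub s).outDeg x = 2 * k + 1)
        = univ.filter fun x : {y // y ∈ s} => ¬ T.r x.1 w = true := by
      ext x
      simp only [Finset.mem_filter, Finset.mem_univ, true_and, hdeg x]
      by_cases h : T.r x.1 w = true
      · simp [h]
      · simp [h]
    rw [hfe, card_filter_subtype s (fun y => ¬ T.r y w = true)]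
    exact hsout
end

section
/- Let T be the tournament obtained from a doubly regular tournament on 4k+3 vertices by deleting one vertex, and let V_e, V_o be the sets of vertices of out-degree 2k and 2k+1 respectively. Then for distinct x, y: if x,y ∈ V_e or x,y ∈ V_o then Δ(x,y) = 2k+1, and if x ∈ V_e, y ∈ V_o then Δ(x,y) = 2k. -/
open Finset

variable {V : Type*}

/-!
In a doubly regular tournament every out-neighbourhood `v(x)` induces a subtournament in which
each vertex has out-degree `k`; counting its arcs gives `|v(x)| = 2k + 1`. In any tournament
`Δ(x,y) = d⁺(x) + d⁺(y) - 2|v(x) ∩ v(y)| - 1`, so `Δ = 2k + 1` for every pair. Deleting `w`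
lowers `d⁺(z)` by one exactly when `z → w`, and lowers `Δ(x,y)` by one exactly when `w`
separates `x` and `y`, i.e. when one of them lies in `V_e` and the other in `V_o`.
-/

theorem Finset.card_erase_add_ite_mem {α : Type*} [DecidableEq α] (s : Finset α) (a : α) :
    (s.erase a).card + (if a ∈ s then 1 else 0) = s.card := by
  split_ifs with h
  · exact card_erase_add_one h
  · rw [erase_eq_of_notMem h, add_zero]

namespace Tournament

variable (T : Tournament V)

theorem r_swap_of_ne {x y : V} (h : x ≠ y) : T.r y x = !T.r x y := by
  rw [T.total x y h, Bool.not_not]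

theorem ite_r_add_ite_r_add_ite_eq_one [DecidableEq V] (y z : V) :
    ((if T.r y z then 1 else 0) + (if T.r z y then 1 else 0) + (if z = y then 1 else 0) : ℕ)
      = 1 := by
  by_cases hzy : z = y
  · simp [hzy, T.irrefl]
  · rw [T.r_swap_of_ne hzy]
    cases T.r z y <;> simp [hzy]

variable [Fintype V]

theorem card_inter_outSet_add_card_inter_inSet [DecidableEq V] (s : Finset V) (y : V) :
    (s ∩ T.outSet y).card + (s ∩ T.inSet y).card + (if y ∈ s then 1 else 0) = s.card := by
  simp only [outSet, inSet, inter_filter, inter_univ, card_filter,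
    ← sum_ite_eq' s y (fun _ => (1 : ℕ)), ← sum_add_distrib]
  rw [sum_congr rfl fun z _ => T.ite_r_add_ite_r_add_ite_eq_one y z, card_eq_sum_ones]

theorem outDeg_add_inDeg_add_one [DecidableEq V] (x : V) :
    T.outDeg x + T.inDeg x + 1 = Fintype.card V := by
  simpa [outDeg, inDeg] using T.card_inter_outSet_add_card_inter_inSet univ x

theorem sum_outDeg_eq_sum_inDeg : ∑ x, T.outDeg x = ∑ x, T.inDeg x := by
  simp only [outDeg, inDeg, outSet, inSet, card_filter]
  exact sum_comm

theorem two_mul_sum_outDeg :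
    2 * ∑ x, T.outDeg x = Fintype.card V * (Fintype.card V - 1) := by
  classical
  calc 2 * ∑ x, T.outDeg x = ∑ x, (T.outDeg x + T.inDeg x) := by
        rw [sum_add_distrib, ← sum_outDeg_eq_sum_inDeg, two_mul]
    _ = ∑ _x : V, (Fintype.card V - 1) :=
        sum_congr rfl fun x _ => by have := T.outDeg_add_inDeg_add_one x; omega
    _ = Fintype.card V * (Fintype.card V - 1) := by simp

theorem sep_add_two_mul_card_inter_add_one [DecidableEq V] {x y : V} (hxy : x ≠ y) :
    T.sep x y + 2 * (T.outSet x ∩ T.outSet y).card + 1 = T.outDeg x + T.outDeg y := by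
  have hx := T.card_inter_outSet_add_card_inter_inSet (T.outSet x) y
  have hy := T.card_inter_outSet_add_card_inter_inSet (T.outSet y) x
  have hxy' : (if y ∈ T.outSet x then 1 else 0) + (if x ∈ T.outSet y then 1 else 0) = 1 := by
    simp only [outSet, mem_filter, mem_univ, true_and, T.r_swap_of_ne hxy]
    cases T.r x y <;> simp
  rw [inter_comm (T.outSet y) (T.inSet x), inter_comm (T.outSet y)] at hy
  unfold sep outDeg
  omega

variable [DecidableEq V]

theorem sub_outSet (s : Finset V) (x : s) :
    (T.sub s).outSet x = (T.outSet x).subtype (· ∈ s) := by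
  ext a
  simp only [outSet, mem_filter, mem_univ, true_and, mem_subtype]
  rfl

theorem sub_inSet (s : Finset V) (x : s) :
    (T.sub s).inSet x = (T.inSet x).subtype (· ∈ s) := by
  ext a
  simp only [inSet, mem_filter, mem_univ, true_and, mem_subtype]
  rfl

theorem sub_outDeg (s : Finset V) (x : s) :
    (T.sub s).outDeg x = (T.outSet x ∩ s).card := by
  rw [outDeg, sub_outSet, card_subtype, filter_mem_eq_inter]

theorem sub_sep (s : Finset V) (x y : s) :
    (T.sub s).sep x y =
      (T.outSet x ∩ T.inSet y ∩ s).card + (T.inSet x ∩ T.outSet y ∩ s).card := by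
  have subtype_inter (a b : Finset V) :
      a.subtype (· ∈ s) ∩ b.subtype (· ∈ s) = (a ∩ b).subtype (· ∈ s) := by
    ext; simp
  simp only [sep, sub_outSet, sub_inSet, subtype_inter, card_subtype, filter_mem_eq_inter]

theorem sub_erase_outDeg_add_ite (w : V) (x : univ.erase w) :
    (T.sub (univ.erase w)).outDeg x + (if T.r x w then 1 else 0) = T.outDeg x := by
  rw [sub_outDeg, inter_erase, inter_univ, outDeg,
    ← card_erase_add_ite_mem (T.outSet x) w]
  simp only [outSet, mem_filter, mem_univ, true_and]

theorem sub_erase_sep_add_ite_add_ite (w : V) (x y : univ.erase w) :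
    (T.sub (univ.erase w)).sep x y + (if T.r x w ∧ T.r w y then 1 else 0)
      + (if T.r w x ∧ T.r y w then 1 else 0) = T.sep x y := by
  rw [sub_sep, inter_erase, inter_univ, inter_erase, inter_univ,
    sep, ← card_erase_add_ite_mem (T.outSet x ∩ T.inSet y) w,
    ← card_erase_add_ite_mem (T.inSet x ∩ T.outSet y) w]
  simp only [outSet, inSet, and_comm, mem_inter, mem_filter, mem_univ, true_and]
  omega

def IsDoublyRegular (k : ℕ) : Prop :=
  ∀ x y : V, x ≠ y → (T.outSet x ∩ T.outSet y).card = k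

namespace IsDoublyRegular

variable {T} {k : ℕ}

theorem outDeg_eq (hT : T.IsDoublyRegular k) (hcard : 3 ≤ Fintype.card V) (x : V) :
    T.outDeg x = 2 * k + 1 := by
  have hxs : x ∉ T.outSet x := by simp [outSet, T.irrefl]
  have hsub (z : T.outSet x) : (T.sub (T.outSet x)).outDeg z = k := by
    rw [sub_outDeg, inter_comm]
    exact hT x z (ne_of_mem_of_not_mem z.2 hxs).symm
  have hsum := (T.sub (T.outSet x)).two_mul_sum_outDeg
  simp only [hsub, sum_const, card_univ, Fintype.card_coe, smul_eq_mul] at hsum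
  -- `x` is no sink: two vertices beating `x` force `k ≥ 1`, while `v(x) = ∅` forces `k = 0`.
  have hs : (T.outSet x).Nonempty := by
    by_contra hs
    rw [not_nonempty_iff_eq_empty] at hs
    have hin : 1 < (T.inSet x).card := by
      have := T.outDeg_add_inDeg_add_one x
      rw [outDeg, hs, card_empty] at this
      rw [← inDeg]; omega
    obtain ⟨y, hy, z, hz, hyz⟩ := one_lt_card.mp hin
    have hyx : y ≠ x := by rintro rfl; simp [inSet, T.irrefl] at hy
    have hk : k = 0 := by rw [← hT x y hyx.symm, hs, empty_inter, card_empty]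
    have hx : x ∈ T.outSet y ∩ T.outSet z := by simp_all [outSet, inSet]
    simpa [hk, hT y z hyz] using card_pos.mpr ⟨x, hx⟩
  have : 2 * k = (T.outSet x).card - 1 :=
    Nat.eq_of_mul_eq_mul_left hs.card_pos (by rw [← hsum]; ring)
  unfold outDeg
  have := hs.card_pos
  omega

theorem sep_eq (hT : T.IsDoublyRegular k) (hcard : 3 ≤ Fintype.card V) {x y : V} (hxy : x ≠ y) :
    T.sep x y = 2 * k + 1 := by
  have := T.sep_add_two_mul_card_inter_add_one hxy
  rw [hT x y hxy, hT.outDeg_eq hcard, hT.outDeg_eq hcard] at this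
  omega

end IsDoublyRegular

end Tournament

/-- In the tournament obtained from a doubly regular tournament on `4k+3` vertices by
deleting one vertex, with `V_e`, `V_o` the vertices of out-degree `2k`, `2k+1`:
pairs within `V_e` or within `V_o` have `Δ(x,y) = 2k+1`, and mixed pairs have
`Δ(x,y) = 2k`. -/
theorem stmt_11 {V : Type*} [Fintype V] [DecidableEq V] (k : ℕ) (T : Tournament V)
    (hcard : Fintype.card V = 4 * k + 3)
    (hdr : ∀ x y : V, x ≠ y → (T.outSet x ∩ T.outSet y).card = k)
    (w : V) :
    ∀ x y : {v // v ∈ univ.erase w}, x ≠ y →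
      (((T.sub (univ.erase w)).outDeg x = 2 * k ∧
          (T.sub (univ.erase w)).outDeg y = 2 * k) ∨
        ((T.sub (univ.erase w)).outDeg x = 2 * k + 1 ∧
          (T.sub (univ.erase w)).outDeg y = 2 * k + 1) →
        (T.sub (univ.erase w)).sep x y = 2 * k + 1) ∧
      ((T.sub (univ.erase w)).outDeg x = 2 * k ∧
          (T.sub (univ.erase w)).outDeg y = 2 * k + 1 →
        (T.sub (univ.erase w)).sep x y = 2 * k) := by
  intro x y hxy
  have hT : T.IsDoublyRegular k := hdr
  have h3 : 3 ≤ Fintype.card V := by omega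
  have hx := T.sub_erase_outDeg_add_ite w x
  have hy := T.sub_erase_outDeg_add_ite w y
  have hsep := T.sub_erase_sep_add_ite_add_ite w x y
  rw [hT.outDeg_eq h3] at hx hy
  rw [hT.sep_eq h3 (Subtype.coe_ne_coe.mpr hxy), T.r_swap_of_ne (mem_erase.mp x.2).1,
    T.r_swap_of_ne (mem_erase.mp y.2).1] at hsep
  generalize T.r x w = a at hx hsep
  generalize T.r y w = b at hy hsep
  cases a <;> cases b <;>
    simp only [Bool.not_false, Bool.not_true, Bool.false_eq_true, ↓reduceIte, and_true, and_false,
      and_self, add_zero, and_imp] at hx hy hsep ⊢ <;> omega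
end

section
/- Let T be a tournament on n = 4k+2 vertices. Then the arrow-simplicity of T satisfies s(T) ≤ 2k. -/
/-! Some vertex `x` has in-degree at most `(n - 1) / 2`, because the in-degrees and the
out-degrees have the same sum and each vertex has `n - 1` neighbours in total. Reversing the
`inDeg x` arcs into `x` makes `x` a source, and then the other `n - 1` vertices form a module,
which is nontrivial as soon as `n ≥ 3`. For `n ≤ 2` every tournament is simple, so the
infimum defining `s(T)` is taken over the empty set and is `0`. -/

open Finset

variable {V : Type*}

namespace Tournament

lemma ne_of_r {T : Tournament V} {x y : V} (h : T.r x y = true) : x ≠ y := by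
  rintro rfl
  simp [T.irrefl] at h

variable [Fintype V]

lemma outSet_eq_filter_erase (T : Tournament V) (x : V) [DecidableEq V] :
    T.outSet x = (univ.erase x).filter fun y => T.r x y = true := by
  ext y
  simp only [outSet, mem_filter, mem_univ, mem_erase, true_and, and_true]
  exact ⟨fun h => ⟨(ne_of_r h).symm, h⟩, And.right⟩

lemma inSet_eq_filter_erase (T : Tournament V) (x : V) [DecidableEq V] :
    T.inSet x = (univ.erase x).filter fun y => ¬ T.r x y = true := by
  ext y
  simp only [inSet, mem_filter, mem_univ, mem_erase, true_and, and_true]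
  constructor
  · intro h
    exact ⟨ne_of_r h, by simp [T.total x y (ne_of_r h).symm, h]⟩
  · rintro ⟨hyx, h⟩
    simpa [T.total x y hyx.symm] using h

lemma inDeg_add_outDeg (T : Tournament V) (x : V) :
    T.inDeg x + T.outDeg x = Fintype.card V - 1 := by
  classical
  rw [inDeg, outDeg, inSet_eq_filter_erase, outSet_eq_filter_erase, add_comm,
    card_filter_add_card_filter_not, card_erase_of_mem (mem_univ x), card_univ]

lemma sum_inDeg_eq_sum_outDeg (T : Tournament V) : ∑ x, T.inDeg x = ∑ x, T.outDeg x := by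
  simp only [inDeg, outDeg, inSet, outSet, card_filter]
  exact sum_comm

lemma exists_two_mul_inDeg_le [Nonempty V] (T : Tournament V) :
    ∃ x, 2 * T.inDeg x ≤ Fintype.card V - 1 := by
  have hsum : ∑ x, 2 * T.inDeg x = ∑ _x : V, (Fintype.card V - 1) := calc
    ∑ x, 2 * T.inDeg x = ∑ x, T.inDeg x + ∑ x, T.outDeg x := by
      rw [← sum_inDeg_eq_sum_outDeg, ← sum_add_distrib]; simp only [two_mul]
    _ = ∑ _x : V, (Fintype.card V - 1) := by
      rw [← sum_add_distrib]; simp only [inDeg_add_outDeg]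
  obtain ⟨x, -, hx⟩ := exists_le_of_sum_le univ_nonempty hsum.le
  exact ⟨x, hx⟩

def makeSource [DecidableEq V] (T : Tournament V) (x : V) : Tournament V where
  r a b := if a = x then decide (b ≠ x) else if b = x then false else T.r a b
  irrefl a := by by_cases h : a = x <;> simp [h, T.irrefl]
  total a b h := by
    by_cases ha : a = x <;> by_cases hb : b = x
    · exact absurd (ha.trans hb.symm) h
    · simp [ha, hb]
    · simp [ha, hb]
    · simp [ha, hb, T.total a b h]

lemma dist_makeSource [DecidableEq V] (T : Tournament V) (x : V) :
    T.dist (T.makeSource x) = T.inDeg x := by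
  rw [dist, inDeg, ← mul_one #(T.inSet x), ← card_singleton x, ← card_product]
  congr 1
  ext ⟨a, b⟩
  simp only [makeSource, inSet, mem_filter, mem_univ, true_and, mem_product, mem_singleton]
  by_cases ha : a = x <;> by_cases hb : b = x <;> simp_all [T.irrefl]

lemma isModule_erase_of_forall_r {T : Tournament V} {x : V} [DecidableEq V]
    (hx : ∀ y ≠ x, T.r x y = true) : T.IsModule (univ.erase x) := by
  intro z hz
  obtain rfl : z = x := by simpa using hz
  exact Or.inl fun y hy => hx y (ne_of_mem_erase hy)

lemma not_isSimple_of_forall_r {T : Tournament V} {x : V} (hV : 3 ≤ Fintype.card V)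
    (hx : ∀ y ≠ x, T.r x y = true) : ¬ T.IsSimple := by
  classical
  intro hsimple
  rcases hsimple _ (isModule_erase_of_forall_r hx) with hcard | huniv
  · rw [card_erase_of_mem (mem_univ x), card_univ] at hcard
    omega
  · exact notMem_erase x univ (by rw [huniv]; exact mem_univ x)

lemma isSimple_of_card_le_two (hV : Fintype.card V ≤ 2) (T : Tournament V) : T.IsSimple := by
  intro I _
  by_cases hI : I.card ≤ 1
  · exact Or.inl hI
  · exact Or.inr (eq_univ_of_card I (by have := card_le_univ I; omega))

lemma simplicity_le_dist (T : Tournament V) {T' : Tournament V} (h : ¬ T'.IsSimple) :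
    T.simplicity ≤ T.dist T' :=
  Nat.sInf_le ⟨T', h, rfl⟩

lemma simplicity_eq_zero_of_card_le_two (hV : Fintype.card V ≤ 2) (T : Tournament V) :
    T.simplicity = 0 :=
  Nat.sInf_eq_zero.2 <| Or.inr <| Set.eq_empty_of_forall_notMem
    fun _ ⟨T', hT', _⟩ => hT' (isSimple_of_card_le_two hV T')

lemma simplicity_le_inDeg (hV : 3 ≤ Fintype.card V) (T : Tournament V) (x : V) :
    T.simplicity ≤ T.inDeg x := by
  classical
  have hsource : ∀ y ≠ x, (T.makeSource x).r x y = true := fun y hy => by simp [makeSource, hy]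
  exact dist_makeSource T x ▸ T.simplicity_le_dist (not_isSimple_of_forall_r hV hsource)

theorem two_mul_simplicity_le (T : Tournament V) :
    2 * T.simplicity ≤ Fintype.card V - 1 := by
  by_cases hV : Fintype.card V ≤ 2
  · simp [simplicity_eq_zero_of_card_le_two hV T]
  · have : Nonempty V := Fintype.card_pos_iff.1 (by omega)
    obtain ⟨x, hx⟩ := T.exists_two_mul_inDeg_le
    have := simplicity_le_inDeg (by omega) T x
    omega

end Tournament

theorem stmt_16_general {V : Type*} [Fintype V] (k : ℕ) (T : Tournament V)
    (hcard : Fintype.card V = 4 * k + 2) :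
    T.simplicity ≤ 2 * k := by
  have := T.two_mul_simplicity_le
  omega

/-- If `n = 4k+2` then `s(T) ≤ 2k`. -/
theorem stmt_16 {V : Type*} [Fintype V] [DecidableEq V] (k : ℕ) (T : Tournament V)
    (hcard : Fintype.card V = 4 * k + 2) :
    T.simplicity ≤ 2 * k :=
  stmt_16_general k T hcard
end

section
/- Let T be a tournament on n = 4k+1 vertices. Then the arrow-simplicity of T satisfies s(T) ≤ 2k - 1. -/
open Finset

variable {V : Type*}

set_option linter.unusedSectionVars false
namespace Tournament
variable {V : Type*} [Fintype V] [DecidableEq V] (T : Tournament V)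

lemma r_asymm {x y : V} (h : T.r x y = true) : T.r y x = false := by
  by_cases hxy : x = y
  · subst hxy; exact T.irrefl x
  · have := T.total y x (Ne.symm hxy); rw [this, h]; rfl

@[simp] lemma mem_outSet {x y : V} : y ∈ T.outSet x ↔ T.r x y = true := by
  simp [outSet]

@[simp] lemma mem_inSet {x y : V} : y ∈ T.inSet x ↔ T.r y x = true := by
  simp [inSet]

lemma r_of_ne {x y : V} (h : x ≠ y) (h2 : T.r x y = false) : T.r y x = true := by
  have := T.total x y h
  rw [h2] at this
  simpa using this.symm

/-- The flipped tournament. -/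
def flip (g : V → V → Bool) (hs : ∀ a b, g a b = g b a) (hi : ∀ a, g a a = false) :
    Tournament V where
  r := T.flipRel g
  irrefl a := by simp [flipRel, hi, T.irrefl]
  total a b h := by
    simp only [flipRel, hs a b, T.total a b h]
    cases g b a <;> simp

lemma flip_r (g : V → V → Bool) (hs : ∀ a b, g a b = g b a) (hi : ∀ a, g a a = false)
    (x y : V) : (T.flip g hs hi).r x y = if g x y = true then !T.r x y else T.r x y := rfl

lemma dist_flip (g : V → V → Bool) (hs : ∀ a b, g a b = g b a) (hi : ∀ a, g a a = false) :
    T.dist (T.flip g hs hi) =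
      (univ.filter fun p : V × V => g p.1 p.2 = true ∧ T.r p.1 p.2 = true).card := by
  unfold dist
  congr 1
  apply filter_congr
  intro p _
  simp only [flip_r]
  constructor
  · rintro ⟨h1, h2⟩
    refine ⟨?_, h1⟩
    by_contra hg
    simp [hg, h1] at h2
  · rintro ⟨hg, h1⟩
    simp [hg, h1]

end Tournament
namespace Tournament
variable {V : Type*} [Fintype V] [DecidableEq V] (T : Tournament V)

lemma not_simple_of_sink (T' : Tournament V) (x : V) (h3 : 3 ≤ Fintype.card V)
    (hx : ∀ y, T'.r y x = true ∨ y = x) : ¬ T'.IsSimple := by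
  intro hs
  have hmod : T'.IsModule (univ.erase x) := by
    intro z hz
    have hz : z = x := by simpa using hz
    rw [hz]
    right
    intro y hy
    have hy : y ≠ x := by simpa using hy
    rcases hx y with h | h
    · exact h
    · exact absurd h hy
  rcases hs _ hmod with h | h
  · rw [card_erase_of_mem (mem_univ x), card_univ] at h
    omega
  · have : x ∈ univ.erase x := by rw [h]; exact mem_univ x
    simp at this

/-- Flip all arcs from `x` to its out-neighbors: `x` becomes a sink. -/
lemma exists_nonsimple_outDeg (x : V) (h3 : 3 ≤ Fintype.card V) :
    ∃ T' : Tournament V, ¬ T'.IsSimple ∧ T.dist T' = T.outDeg x := by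
  classical
  set g : V → V → Bool := fun a b =>
    decide ((a = x ∧ b ∈ T.outSet x) ∨ (b = x ∧ a ∈ T.outSet x)) with hg
  have hs : ∀ a b, g a b = g b a := by
    intro a b; simp only [hg, decide_eq_decide]; tauto
  have hxnotout : x ∉ T.outSet x := by simp [T.irrefl]
  have hi : ∀ a, g a a = false := by
    intro a
    simp only [hg, decide_eq_false_iff_not]
    rintro (⟨rfl, h⟩ | ⟨rfl, h⟩) <;> exact hxnotout h
  refine ⟨T.flip g hs hi, ?_, ?_⟩
  · apply not_simple_of_sink _ x h3
    intro y
    by_cases hyx : y = x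
    · right; exact hyx
    · left
      rw [flip_r]
      by_cases hyo : y ∈ T.outSet x
      · have : g y x = true := by
          simp only [hg, decide_eq_true_eq]; tauto
        rw [if_pos this]
        have : T.r y x = false := T.r_asymm (by simpa using hyo)
        simp [this]
      · have : g y x = false := by
          simp only [hg, decide_eq_false_iff_not]
          rintro (⟨rfl, h⟩ | ⟨h, h2⟩) <;> [exact hyx rfl; exact hyo h2]
        rw [if_neg (by simp [this])]
        apply T.r_of_ne (Ne.symm hyx)
        by_contra h
        exact hyo (by simp [show T.r x y = true by revert h; cases T.r x y <;> simp])
  · rw [dist_flip, outDeg]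
    have : (univ.filter fun p : V × V => g p.1 p.2 = true ∧ T.r p.1 p.2 = true)
        = (T.outSet x).image (fun w => (x, w)) := by
      ext p
      simp only [mem_filter, mem_univ, true_and, mem_image, hg, decide_eq_true_eq]
      constructor
      · rintro ⟨(⟨h1, h2⟩ | ⟨h1, h2⟩), hr⟩
        · exact ⟨p.2, h2, by rw [← h1]⟩
        · exfalso
          have hne : p.1 ≠ x := fun e => hxnotout (e ▸ h2)
          have : T.r p.1 x = false := T.r_asymm (by simpa using h2)
          rw [h1] at hr; rw [this] at hr; exact absurd hr (by simp)
      · rintro ⟨w, hw, rfl⟩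
        exact ⟨Or.inl ⟨rfl, hw⟩, by simpa using hw⟩
    rw [this, card_image_of_injective _ (fun a b h => by simpa using h)]

/-- Flip all arcs from in-neighbors to `x`: `x` becomes a source. -/
lemma exists_nonsimple_inDeg (x : V) (h3 : 3 ≤ Fintype.card V) :
    ∃ T' : Tournament V, ¬ T'.IsSimple ∧ T.dist T' = T.inDeg x := by
  classical
  set g : V → V → Bool := fun a b =>
    decide ((a = x ∧ b ∈ T.inSet x) ∨ (b = x ∧ a ∈ T.inSet x)) with hg
  have hs : ∀ a b, g a b = g b a := by
    intro a b; simp only [hg, decide_eq_decide]; tauto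
  have hxnotin : x ∉ T.inSet x := by simp [T.irrefl]
  have hi : ∀ a, g a a = false := by
    intro a
    simp only [hg, decide_eq_false_iff_not]
    rintro (⟨rfl, h⟩ | ⟨rfl, h⟩) <;> exact hxnotin h
  refine ⟨T.flip g hs hi, ?_, ?_⟩
  · -- here x becomes a source: everyone loses to x, i.e. ∀ y ≠ x, (flip).r x y = true
    -- use the mirrored module lemma: instead show univ.erase x is a module via "left" case
    intro hsimp
    have hmod : (T.flip g hs hi).IsModule (univ.erase x) := by
      intro z hz
      have hz : z = x := by simpa using hz
      rw [hz]
      left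
      intro y hy
      have hyx : y ≠ x := by simpa using hy
      rw [flip_r]
      by_cases hyi : y ∈ T.inSet x
      · have : g x y = true := by
          simp only [hg, decide_eq_true_eq]; tauto
        rw [if_pos this]
        have : T.r x y = false := T.r_asymm (by simpa using hyi)
        simp [this]
      · have : g x y = false := by
          simp only [hg, decide_eq_false_iff_not]
          rintro (⟨h1, h2⟩ | ⟨rfl, h2⟩) <;> [exact hyi h2; exact hyx rfl]
        rw [if_neg (by simp [this])]
        apply T.r_of_ne hyx
        by_contra h
        exact hyi (by simp [show T.r y x = true by revert h; cases T.r y x <;> simp])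
    rcases hsimp _ hmod with h | h
    · rw [card_erase_of_mem (mem_univ x), card_univ] at h
      omega
    · have : x ∈ univ.erase x := by rw [h]; exact mem_univ x
      simp at this
  · rw [dist_flip, inDeg]
    have : (univ.filter fun p : V × V => g p.1 p.2 = true ∧ T.r p.1 p.2 = true)
        = (T.inSet x).image (fun w => (w, x)) := by
      ext p
      simp only [mem_filter, mem_univ, true_and, mem_image, hg, decide_eq_true_eq]
      constructor
      · rintro ⟨(⟨h1, h2⟩ | ⟨h1, h2⟩), hr⟩
        · exfalso
          have : T.r x p.2 = false := T.r_asymm (by simpa using h2)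
          rw [h1] at hr; rw [this] at hr; exact absurd hr (by simp)
        · exact ⟨p.1, h2, by rw [← h1]⟩
      · rintro ⟨w, hw, rfl⟩
        exact ⟨Or.inr ⟨rfl, hw⟩, by simpa using hw⟩
    rw [this, card_image_of_injective _ (fun a b h => by simpa using h)]

end Tournament
namespace Tournament
variable {V : Type*} [Fintype V] [DecidableEq V] (T : Tournament V)

lemma exists_nonsimple_sep (x y : V) (hxy : x ≠ y) (h3 : 3 ≤ Fintype.card V) :
    ∃ T' : Tournament V, ¬ T'.IsSimple ∧ T.dist T' = T.sep x y := by
  classical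
  set B : Finset V := T.outSet x ∩ T.inSet y with hB
  set C : Finset V := T.inSet x ∩ T.outSet y with hC
  have hyB : y ∉ B := by simp [hB, T.irrefl]
  have hyC : y ∉ C := by simp [hC, T.irrefl]
  have hxB : x ∉ B := by simp [hB, T.irrefl]
  have hxC : x ∉ C := by simp [hC, T.irrefl]
  have hBC : Disjoint B C := by
    rw [disjoint_left]
    intro z hzB hzC
    simp only [hB, hC, mem_inter, mem_outSet, mem_inSet] at hzB hzC
    have := T.r_asymm hzB.1
    rw [this] at hzC
    exact absurd hzC.1 (by simp)
  set g : V → V → Bool := fun a b =>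
    decide ((a = y ∧ b ∈ B ∪ C) ∨ (b = y ∧ a ∈ B ∪ C)) with hg
  have hs : ∀ a b, g a b = g b a := by
    intro a b; simp only [hg, decide_eq_decide]; tauto
  have hi : ∀ a, g a a = false := by
    intro a
    simp only [hg, decide_eq_false_iff_not]
    rintro (⟨rfl, h⟩ | ⟨rfl, h⟩) <;>
      exact absurd h (by simp [hyB, hyC])
  refine ⟨T.flip g hs hi, ?_, ?_⟩
  · intro hsimp
    have hmod : (T.flip g hs hi).IsModule {x, y} := by
      intro z hz
      simp only [mem_insert, mem_singleton, not_or] at hz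
      obtain ⟨hzx, hzy⟩ := hz
      have hgzx : g z x = false := by
        simp only [hg, decide_eq_false_iff_not]
        rintro (⟨rfl, h⟩ | ⟨rfl, h⟩)
        · exact hzy rfl
        · exact hxy rfl
      have hgxz : g x z = false := by rw [hs]; exact hgzx
      by_cases hzB : z ∈ B
      · -- x → z → y originally; flip y–z: z loses to both
        right
        intro w hw
        simp only [mem_insert, mem_singleton] at hw
        have hz1 : T.r x z = true := by
          have h' := (mem_inter.mp hzB).1
          simpa using h'
        have hz2 : T.r z y = true := by
          have h' := (mem_inter.mp hzB).2
          simpa using h'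
        rcases hw with rfl | rfl
        · rw [flip_r, if_neg (by simp [hgxz])]; exact hz1
        · have hzu : z ∈ B ∪ C := mem_union_left _ hzB
          have hgy : g w z = true := by
            simp only [hg, decide_eq_true_eq]
            tauto
          rw [flip_r, if_pos hgy]
          have hzw : T.r w z = false := T.r_asymm hz2
          simp [hzw]
      · by_cases hzC : z ∈ C
        · -- z → x, y → z originally; flip y–z: z beats both
          left
          intro w hw
          simp only [mem_insert, mem_singleton] at hw
          have hz1 : T.r z x = true := by
            have h' := (mem_inter.mp hzC).1
            simpa using h'
          have hz2 : T.r y z = true := by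
            have h' := (mem_inter.mp hzC).2
            simpa using h'
          rcases hw with rfl | rfl
          · rw [flip_r, if_neg (by simp [hgzx])]; exact hz1
          · have hzu : z ∈ B ∪ C := mem_union_right _ hzC
            have hgy : g z w = true := by
              simp only [hg, decide_eq_true_eq]
              tauto
            rw [flip_r, if_pos hgy]
            have hzw : T.r z w = false := T.r_asymm hz2
            simp [hzw]
        · -- z not a separator: relates uniformly, no flips
          have hgzy : g z y = false := by
            simp only [hg, decide_eq_false_iff_not, mem_union]
            rintro (⟨rfl, h⟩ | ⟨_, (h | h)⟩)
            · exact hzy rfl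
            · exact hzB h
            · exact hzC h
          have hgyz : g y z = false := by rw [hs]; exact hgzy
          by_cases hr : T.r z x = true
          · left
            intro w hw
            simp only [mem_insert, mem_singleton] at hw
            rcases hw with rfl | rfl
            · rw [flip_r, if_neg (by simp [hgzx])]; exact hr
            · rw [flip_r, if_neg (by simp [hgzy])]
              by_contra h
              have hzw : T.r w z = true := T.r_of_ne hzy
                (by revert h; cases T.r z w <;> simp)
              exact hzC (by simp [hC, hr, hzw])
          · right
            intro w hw
            simp only [mem_insert, mem_singleton] at hw
            have hxz : T.r x z = true := T.r_of_ne hzx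
              (by revert hr; cases T.r z x <;> simp)
            rcases hw with rfl | rfl
            · rw [flip_r, if_neg (by simp [hgxz])]; exact hxz
            · rw [flip_r, if_neg (by simp [hgyz])]
              by_contra h
              have hzw : T.r z w = true := T.r_of_ne (fun e => hzy e.symm)
                (by revert h; cases T.r w z <;> simp)
              exact hzB (by simp [hB, hxz, hzw])
    rcases hsimp _ hmod with h | h
    · rw [card_insert_of_notMem (by simp [hxy]), card_singleton] at h
      omega
    · have h2 : ({x, y} : Finset V).card = Fintype.card V := by rw [h, card_univ]
      rw [card_insert_of_notMem (by simp [hxy]), card_singleton] at h2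
      omega
  · rw [dist_flip, sep]
    have heq : (univ.filter fun p : V × V => g p.1 p.2 = true ∧ T.r p.1 p.2 = true)
        = B.image (fun z => (z, y)) ∪ C.image (fun z => (y, z)) := by
      ext p
      simp only [mem_filter, mem_univ, true_and, mem_union, mem_image, hg,
        decide_eq_true_eq]
      constructor
      · rintro ⟨(⟨h1, h2⟩ | ⟨h1, h2⟩), hr⟩
        · -- p.1 = y, p.2 ∈ B ∪ C, T.r y p.2 = true
          rcases h2 with h2 | h2
          · exfalso
            have : T.r p.1 p.2 = false := by
              rw [h1]
              exact T.r_asymm (by simp only [hB, mem_inter, mem_inSet] at h2; exact h2.2)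
            rw [this] at hr; exact absurd hr (by simp)
          · right; exact ⟨p.2, h2, by rw [← h1]⟩
        · rcases h2 with h2 | h2
          · left; exact ⟨p.1, h2, by rw [← h1]⟩
          · exfalso
            have : T.r p.1 p.2 = false := by
              rw [h1]
              exact T.r_asymm (by simp only [hC, mem_inter, mem_outSet] at h2; exact h2.2)
            rw [this] at hr; exact absurd hr (by simp)
      · rintro (⟨z, hz, rfl⟩ | ⟨z, hz, rfl⟩)
        · refine ⟨Or.inr ⟨rfl, by simp [hz]⟩, ?_⟩
          simp only [hB, mem_inter, mem_inSet] at hz; exact hz.2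
        · refine ⟨Or.inl ⟨rfl, by simp [hz]⟩, ?_⟩
          simp only [hC, mem_inter, mem_outSet] at hz; exact hz.2
    have hdis : Disjoint (B.image fun z => (z, y)) (C.image fun z => (y, z)) := by
      rw [disjoint_left]
      rintro p hp hp2
      simp only [mem_image] at hp hp2
      obtain ⟨z, hz, rfl⟩ := hp
      obtain ⟨w, hw, he⟩ := hp2
      injection he with h1 h2
      rw [← h1] at hz
      exact hyB hz
    rw [heq, card_union_of_disjoint hdis,
      card_image_of_injective _ (fun a b h => by simpa using h),
      card_image_of_injective _ (fun a b h => by simpa using h)]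
end Tournament
namespace Tournament
variable {V : Type*} [Fintype V] [DecidableEq V] (T : Tournament V)

lemma outSet_disjoint_inSet (x : V) : Disjoint (T.outSet x) (T.inSet x) := by
  rw [disjoint_left]
  intro z h1 h2
  simp only [mem_outSet] at h1
  simp only [mem_inSet] at h2
  rw [T.r_asymm h1] at h2
  exact absurd h2 (by simp)

lemma outSet_union_inSet (x : V) : T.outSet x ∪ T.inSet x = univ.erase x := by
  ext z
  simp only [mem_union, mem_outSet, mem_inSet, mem_erase, mem_univ, and_true]
  constructor
  · rintro (h | h) <;> intro e
    · subst e; rw [T.irrefl] at h; exact absurd h (by simp)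
    · subst e; rw [T.irrefl] at h; exact absurd h (by simp)
  · intro h
    cases hb : T.r x z with
    | true => exact Or.inl rfl
    | false => exact Or.inr (T.r_of_ne (fun e => h e.symm) hb)

lemma deg_sum (x : V) : T.outDeg x + T.inDeg x = Fintype.card V - 1 := by
  rw [outDeg, inDeg, ← card_union_of_disjoint (T.outSet_disjoint_inSet x),
    outSet_union_inSet, card_erase_of_mem (mem_univ x), card_univ]

lemma sep_symm (x y : V) : T.sep x y = T.sep y x := by
  rw [sep, sep, inter_comm, add_comm, inter_comm]

lemma sep_odd_of_r {k : ℕ} (hreg : ∀ z, T.outDeg z = 2 * k) {x y : V}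
    (hr : T.r x y = true) : ∃ b, T.sep x y = 2 * b + 1 := by
  have hxy : x ≠ y := by
    intro e; subst e; rw [T.irrefl] at hr; exact absurd hr (by simp)
  set A := T.outSet x ∩ T.outSet y with hA
  set B := T.outSet x ∩ T.inSet y with hB
  set C := T.inSet x ∩ T.outSet y with hC
  have key1 : T.outDeg x = A.card + (B.card + 1) := by
    have hsplit : T.outSet x = A ∪ (B ∪ {y}) := by
      ext z
      simp only [hA, hB, mem_union, mem_inter, mem_outSet, mem_inSet, mem_singleton]
      constructor
      · intro hz
        by_cases hzy : z = y
        · exact Or.inr (Or.inr hzy)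
        · cases hb : T.r y z with
          | true => exact Or.inl ⟨hz, rfl⟩
          | false => exact Or.inr (Or.inl ⟨hz, T.r_of_ne (fun e => hzy e.symm) hb⟩)
      · rintro (⟨h, -⟩ | ⟨h, -⟩ | rfl)
        · exact h
        · exact h
        · exact hr
    have d2 : Disjoint B ({y} : Finset V) := by
      rw [disjoint_left]
      intro z hz hz2
      rw [mem_singleton] at hz2
      subst hz2
      have := (mem_inter.mp hz).2
      simp [T.irrefl] at this
    have d1 : Disjoint A (B ∪ {y}) := by
      rw [disjoint_left]
      intro z hz hz2
      have hyz : T.r y z = true := by simpa using (mem_inter.mp hz).2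
      rcases mem_union.mp hz2 with h | h
      · have hzy : T.r z y = true := by simpa using (mem_inter.mp h).2
        rw [T.r_asymm hzy] at hyz
        exact absurd hyz (by simp)
      · rw [mem_singleton] at h
        subst h
        simp [T.irrefl] at hyz
    rw [outDeg, hsplit, card_union_of_disjoint d1, card_union_of_disjoint d2,
      card_singleton]
  have key2 : T.outDeg y = A.card + C.card := by
    have hsplit : T.outSet y = (T.outSet y ∩ T.outSet x) ∪ C := by
      ext z
      simp only [hC, mem_union, mem_inter, mem_outSet, mem_inSet]
      constructor
      · intro hz
        have hzx : z ≠ x := by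
          intro e; subst e
          rw [T.r_asymm hr] at hz
          exact absurd hz (by simp)
        cases hb : T.r x z with
        | true => exact Or.inl ⟨hz, rfl⟩
        | false => exact Or.inr ⟨T.r_of_ne (fun e => hzx e.symm) hb, hz⟩
      · rintro (⟨h, -⟩ | ⟨-, h⟩) <;> exact h
    have d1 : Disjoint (T.outSet y ∩ T.outSet x) C := by
      rw [disjoint_left]
      intro z hz hz2
      have h1 : T.r x z = true := by simpa using (mem_inter.mp hz).2
      have h2 : T.r z x = true := by simpa using (mem_inter.mp hz2).1
      rw [T.r_asymm h1] at h2
      exact absurd h2 (by simp)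
    rw [outDeg, hsplit, card_union_of_disjoint d1, inter_comm]
  refine ⟨B.card, ?_⟩
  have e1 := hreg x
  have e2 := hreg y
  rw [key1] at e1
  rw [key2] at e2
  have : C.card = B.card + 1 := by omega
  rw [sep, ← hB, ← hC, this]
  ring

lemma sep_odd {k : ℕ} (hreg : ∀ z, T.outDeg z = 2 * k) {x y : V} (hxy : x ≠ y) :
    ∃ b, T.sep x y = 2 * b + 1 := by
  cases hb : T.r x y with
  | true => exact T.sep_odd_of_r hreg hb
  | false =>
    rw [sep_symm]
    exact T.sep_odd_of_r hreg (T.r_of_ne hxy hb)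

lemma inDeg_eq {k : ℕ} (hreg : ∀ z, T.outDeg z = 2 * k)
    (hcard : Fintype.card V = 4 * k + 1) (z : V) : T.inDeg z = 2 * k := by
  have := T.deg_sum z
  have := hreg z
  omega

lemma exists_pair_sep_le {k : ℕ} (hreg : ∀ z, T.outDeg z = 2 * k)
    (hcard : Fintype.card V = 4 * k + 1) (hk : 1 ≤ k) :
    ∃ x y, x ≠ y ∧ T.sep x y ≤ 2 * k := by
  have hpos : 0 < Fintype.card V := by omega
  obtain ⟨x⟩ := Fintype.card_pos_iff.mp hpos
  -- sum of sep x y over all y equals 8 k^2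
  have hA : ∑ y : V, (T.outSet x ∩ T.inSet y).card = (2 * k) * (2 * k) := by
    have h1 : ∀ y : V, (T.outSet x ∩ T.inSet y).card
        = ∑ z ∈ T.outSet x, if T.r z y = true then 1 else 0 := by
      intro y
      rw [← Finset.card_filter]
      congr 1
      ext z
      simp [mem_inter]
    simp only [h1]
    rw [Finset.sum_comm]
    have h2 : ∀ z : V, (∑ y : V, if T.r z y = true then 1 else 0) = 2 * k := by
      intro z
      rw [← Finset.card_filter]
      exact hreg z
    calc ∑ z ∈ T.outSet x, ∑ y : V, (if T.r z y = true then 1 else 0)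
        = ∑ z ∈ T.outSet x, 2 * k := by
          apply Finset.sum_congr rfl
          intro z _
          exact h2 z
      _ = (T.outSet x).card * (2 * k) := by rw [Finset.sum_const, smul_eq_mul]
      _ = (2 * k) * (2 * k) := by rw [← outDeg, hreg x]
  have hBsum : ∑ y : V, (T.inSet x ∩ T.outSet y).card = (2 * k) * (2 * k) := by
    have h1 : ∀ y : V, (T.inSet x ∩ T.outSet y).card
        = ∑ z ∈ T.inSet x, if T.r y z = true then 1 else 0 := by
      intro y
      rw [← Finset.card_filter]
      congr 1
      ext z
      simp [mem_inter]
    simp only [h1]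
    rw [Finset.sum_comm]
    have h2 : ∀ z : V, (∑ y : V, if T.r y z = true then 1 else 0) = 2 * k := by
      intro z
      rw [← Finset.card_filter]
      exact T.inDeg_eq hreg hcard z
    calc ∑ z ∈ T.inSet x, ∑ y : V, (if T.r y z = true then 1 else 0)
        = ∑ z ∈ T.inSet x, 2 * k := by
          apply Finset.sum_congr rfl
          intro z _
          exact h2 z
      _ = (T.inSet x).card * (2 * k) := by rw [Finset.sum_const, smul_eq_mul]
      _ = (2 * k) * (2 * k) := by rw [← inDeg, T.inDeg_eq hreg hcard x]
  have hsum : ∑ y : V, T.sep x y = 8 * k * k := by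
    unfold sep
    rw [Finset.sum_add_distrib, hA, hBsum]
    ring
  by_contra hcon
  push_neg at hcon
  have hbig : ∀ y ∈ univ.erase x, 2 * k + 1 ≤ T.sep x y := by
    intro y hy
    have : y ≠ x := by simpa using (mem_erase.mp hy).1
    exact hcon x y (fun e => this e.symm)
  have hsep0 : T.sep x x = 0 := by
    rw [sep]
    have : T.outSet x ∩ T.inSet x = ∅ :=
      disjoint_iff_inter_eq_empty.mp (T.outSet_disjoint_inSet x)
    rw [this]
    have : T.inSet x ∩ T.outSet x = ∅ := by
      rw [inter_comm]
      exact disjoint_iff_inter_eq_empty.mp (T.outSet_disjoint_inSet x)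
    rw [this]
    simp
  have hsplit : ∑ y : V, T.sep x y = T.sep x x + ∑ y ∈ univ.erase x, T.sep x y := by
    rw [← Finset.add_sum_erase _ _ (mem_univ x)]
  have hlow : (univ.erase x).card * (2 * k + 1) ≤ ∑ y ∈ univ.erase x, T.sep x y := by
    calc (univ.erase x).card * (2 * k + 1) = ∑ y ∈ univ.erase x, (2 * k + 1) := by
          rw [Finset.sum_const, smul_eq_mul]
      _ ≤ ∑ y ∈ univ.erase x, T.sep x y := Finset.sum_le_sum hbig
  rw [card_erase_of_mem (mem_univ x), card_univ, hcard] at hlow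
  rw [hsplit, hsep0] at hsum
  have h4 : (4 * k + 1 - 1) = 4 * k := by omega
  rw [h4] at hlow
  nlinarith [hlow, hsum]

end Tournament
/-- If `n = 4k+1` then `s(T) ≤ 2k - 1`. -/
theorem stmt_17 {V : Type*} [Fintype V] [DecidableEq V] (k : ℕ) (T : Tournament V)
    (hcard : Fintype.card V = 4 * k + 1) :
    T.simplicity ≤ 2 * k - 1 := by
  rcases Nat.eq_zero_or_pos k with rfl | hk
  · -- one vertex: every tournament is simple, so the defining set is empty
    have hempty : {m : ℕ | ∃ T' : Tournament V, ¬ T'.IsSimple ∧ T.dist T' = m} = ∅ := by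
      ext m
      simp only [Set.mem_setOf_eq, Set.mem_empty_iff_false, iff_false, not_exists]
      rintro T' ⟨hns, -⟩
      refine hns fun I _ => Or.inl ?_
      have := Finset.card_le_univ I
      omega
    rw [Tournament.simplicity, hempty, Nat.sInf_empty]
  · have h3 : 3 ≤ Fintype.card V := by omega
    by_cases hreg : ∀ z, T.outDeg z = 2 * k
    · obtain ⟨x, y, hxy, hle⟩ := T.exists_pair_sep_le hreg hcard hk
      obtain ⟨b, hodd⟩ := T.sep_odd hreg hxy
      obtain ⟨T', hns, hd⟩ := T.exists_nonsimple_sep x y hxy h3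
      have hsle : T.simplicity ≤ T.sep x y := Nat.sInf_le ⟨T', hns, hd⟩
      omega
    · push_neg at hreg
      obtain ⟨z, hz⟩ := hreg
      have hds := T.deg_sum z
      rw [hcard] at hds
      by_cases hlt : T.outDeg z ≤ 2 * k - 1
      · obtain ⟨T', hns, hd⟩ := T.exists_nonsimple_outDeg z h3
        have hsle : T.simplicity ≤ T.outDeg z := Nat.sInf_le ⟨T', hns, hd⟩
        omega
      · have hin : T.inDeg z ≤ 2 * k - 1 := by omega
        obtain ⟨T', hns, hd⟩ := T.exists_nonsimple_inDeg z h3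
        have hsle : T.simplicity ≤ T.inDeg z := Nat.sInf_le ⟨T', hns, hd⟩
        omega
end

section
/- Let T be a tournament on n vertices, C a set of vertices with 2 ≤ |C| ≤ n-1, and G a decomposability graph for C with a minimal number of edges. Then G is bipartite with bipartition {C, V∖C}, and for every x ∈ V∖C the neighborhood of x in G equals f(x)∩C or v(x)∩C, so the degree of x in G is min(|f(x)∩C|, |v(x)∩C|). -/
open Finset

variable {V : Type*}

/-- Splitting the (ordered-pair) edge count of a symmetric irreflexive relation
at a vertex `x`. -/
lemma countE_split {V : Type*} [Fintype V] [DecidableEq V] (h : V → V → Bool)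
    (hs : ∀ a b, h a b = h b a) (hi : ∀ a, h a a = false) (x : V) :
    (univ.filter fun p : V × V => h p.1 p.2 = true).card
      = 2 * (univ.filter fun y => h x y = true).card
        + (univ.filter fun p : V × V =>
            h p.1 p.2 = true ∧ p.1 ≠ x ∧ p.2 ≠ x).card := by
  classical
  set N : Finset V := univ.filter fun y => h x y = true with hN
  have hxN : x ∉ N := by simp [hN, hi]
  have hsplit : (univ.filter fun p : V × V => h p.1 p.2 = true)
      = ({x} ×ˢ N) ∪ ((N ×ˢ {x}) ∪ (univ.filter fun p : V × V =>
          h p.1 p.2 = true ∧ p.1 ≠ x ∧ p.2 ≠ x)) := by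
    ext ⟨a, b⟩
    simp only [mem_filter, mem_univ, true_and, mem_union, mem_product,
      mem_singleton, hN]
    constructor
    · intro hab
      by_cases ha : a = x
      · exact Or.inl ⟨ha, by rw [← ha]; exact hab⟩
      · by_cases hb : b = x
        · refine Or.inr (Or.inl ⟨?_, hb⟩)
          rw [hs]; rw [← hb]; exact hab
        · exact Or.inr (Or.inr ⟨hab, ha, hb⟩)
    · rintro (⟨ha, hb⟩ | ⟨⟨ha, hb⟩ | ⟨hab, _, _⟩⟩)
      · rw [ha]; exact hb
      · rw [hb, hs]; exact ha
      · exact hab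
  have d1 : Disjoint (N ×ˢ ({x} : Finset V))
      (univ.filter fun p : V × V => h p.1 p.2 = true ∧ p.1 ≠ x ∧ p.2 ≠ x) := by
    simp only [disjoint_left, mem_product, mem_singleton, mem_filter, mem_univ,
      true_and]
    rintro ⟨a, b⟩ ⟨_, hb⟩ ⟨_, _, hb2⟩
    exact hb2 hb
  have d2 : Disjoint (({x} : Finset V) ×ˢ N)
      ((N ×ˢ ({x} : Finset V)) ∪ (univ.filter fun p : V × V =>
        h p.1 p.2 = true ∧ p.1 ≠ x ∧ p.2 ≠ x)) := by
    simp only [disjoint_left, mem_union, mem_product, mem_singleton, mem_filter,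
      mem_univ, true_and]
    rintro ⟨a, b⟩ ⟨ha, hb⟩ (⟨ha2, _⟩ | ⟨_, ha2, _⟩)
    · exact hxN (ha ▸ ha2)
    · exact ha2 ha
  rw [hsplit, card_union_of_disjoint d2, card_union_of_disjoint d1,
    card_product, card_product, card_singleton]
  ring

/-- Key counting lemma: if `g` is a minimal decomposability graph and `O ⊆ C` is a
set that "works" at `x` (it equals `v(x)∩C` or `f(x)∩C`), then the degree of `x`
in `g` is at most `|O|`. -/
lemma key_le {V : Type*} [Fintype V] [DecidableEq V] (T : Tournament V)
    (C : Finset V) (g : V → V → Bool)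
    (hsymm : ∀ x y, g x y = g y x) (hirr : ∀ x, g x x = false)
    (hmod : ∀ x ∉ C, (∀ y ∈ C, T.flipRel g x y = true) ∨
      (∀ y ∈ C, T.flipRel g y x = true))
    (hmin : ∀ g' : V → V → Bool, (∀ x y, g' x y = g' y x) → (∀ x, g' x x = false) →
      (∀ x ∉ C, (∀ y ∈ C, T.flipRel g' x y = true) ∨
        (∀ y ∈ C, T.flipRel g' y x = true)) →
      (univ.filter fun p : V × V => g p.1 p.2 = true).card ≤
        (univ.filter fun p : V × V => g' p.1 p.2 = true).card)
    (x : V) (hx : x ∉ C) (O : Finset V) (hOC : O ⊆ C)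
    (hO : (∀ y ∈ C, y ∈ O ↔ T.r x y = true) ∨ (∀ y ∈ C, y ∈ O ↔ T.r x y = false)) :
    (univ.filter fun y => g x y = true).card ≤ O.card := by
  classical
  have hxO : x ∉ O := fun h => hx (hOC h)
  set g2 : V → V → Bool := fun a b =>
    if a = x then decide (b ∈ O) else if b = x then decide (a ∈ O) else g a b with hg2
  have hg2xb : ∀ b, g2 x b = decide (b ∈ O) := fun b => by simp [hg2]
  have hg2s : ∀ a b, g2 a b = g2 b a := by
    intro a b
    by_cases ha : a = x <;> by_cases hb : b = x <;> simp [hg2, ha, hb, hsymm a b]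
  have hg2i : ∀ a, g2 a a = false := by
    intro a
    by_cases ha : a = x <;> simp [hg2, ha, hirr a, hxO]
  have hg2off : ∀ a b, a ≠ x → b ≠ x → g2 a b = g a b := by
    intro a b ha hb; simp [hg2, ha, hb]
  have hg2mod : ∀ x' ∉ C, (∀ y ∈ C, T.flipRel g2 x' y = true) ∨
      (∀ y ∈ C, T.flipRel g2 y x' = true) := by
    intro x' hx'
    by_cases hxx : x' = x
    · subst hxx
      rcases hO with hO | hO
      · -- O = v(x)∩C : after flipping, C dominates x
        right
        intro y hy
        have hyx : y ≠ x' := fun h => hx' (h ▸ hy)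
        have htot := T.total y x' hyx
        have : g2 y x' = decide (T.r x' y = true) := by
          rw [hg2s, hg2xb]
          by_cases hr : T.r x' y = true <;> simp [hr, (hO y hy)]
        rw [Tournament.flipRel, this]
        by_cases hr : T.r x' y = true
        · have : T.r y x' = false := by
            rw [htot, hr]; rfl
          simp [hr, this]
        · have hr' : T.r x' y = false := by
            cases hxy : T.r x' y
            · rfl
            · exact absurd hxy hr
          have : T.r y x' = true := by
            rw [htot, hr']; rfl
          simp [hr, this]
      · -- O = f(x)∩C : after flipping, x dominates C
        left
        intro y hy
        have : g2 x' y = decide (T.r x' y = false) := by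
          rw [hg2xb]
          by_cases hr : T.r x' y = false <;>
            simp_all [(hO y hy)]
        rw [Tournament.flipRel, this]
        by_cases hr : T.r x' y = false
        · simp [hr]
        · have hr' : T.r x' y = true := by
            cases hxy : T.r x' y
            · exact absurd hxy hr
            · rfl
          simp [hr', hr]
    · rcases hmod x' hx' with h | h
      · left
        intro y hy
        have hyx : y ≠ x := fun h => hx (h ▸ hy)
        have := h y hy
        rw [Tournament.flipRel, hg2off x' y hxx hyx]
        rwa [Tournament.flipRel] at this
      · right
        intro y hy
        have hyx : y ≠ x := fun h => hx (h ▸ hy)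
        have := h y hy
        rw [Tournament.flipRel, hg2off y x' hyx hxx]
        rwa [Tournament.flipRel] at this
  have hrest : (univ.filter fun p : V × V => g p.1 p.2 = true ∧ p.1 ≠ x ∧ p.2 ≠ x)
      = (univ.filter fun p : V × V => g2 p.1 p.2 = true ∧ p.1 ≠ x ∧ p.2 ≠ x) := by
    ext ⟨a, b⟩
    simp only [mem_filter, mem_univ, true_and]
    constructor
    · rintro ⟨hab, ha, hb⟩; exact ⟨by rw [hg2off a b ha hb]; exact hab, ha, hb⟩
    · rintro ⟨hab, ha, hb⟩; exact ⟨by rw [← hg2off a b ha hb]; exact hab, ha, hb⟩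
  have hN2 : (univ.filter fun y => g2 x y = true) = O := by
    ext y; simp [hg2xb]
  have hle := hmin g2 hg2s hg2i hg2mod
  rw [countE_split g hsymm hirr x, countE_split g2 hg2s hg2i x, hrest, hN2] at hle
  omega

/-- If `G` (given by its symmetric irreflexive adjacency function `g`) is a
decomposability graph for `C` with a minimal number of edges (edges are counted here
as ordered pairs, i.e. twice), then `G` is bipartite with bipartition `{C, V∖C}`,
and for every `x ∉ C` its neighborhood equals `f(x)∩C` or `v(x)∩C`, so its degree is
`min(|f(x)∩C|, |v(x)∩C|)`. -/
theorem stmt_19 {V : Type*} [Fintype V] [DecidableEq V] (T : Tournament V)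
    (C : Finset V) (h1 : 2 ≤ C.card) (h2 : C.card ≤ Fintype.card V - 1)
    (g : V → V → Bool)
    (hsymm : ∀ x y, g x y = g y x) (hirr : ∀ x, g x x = false)
    (hmod : ∀ x ∉ C, (∀ y ∈ C, T.flipRel g x y = true) ∨
      (∀ y ∈ C, T.flipRel g y x = true))
    (hmin : ∀ g' : V → V → Bool, (∀ x y, g' x y = g' y x) → (∀ x, g' x x = false) →
      (∀ x ∉ C, (∀ y ∈ C, T.flipRel g' x y = true) ∨
        (∀ y ∈ C, T.flipRel g' y x = true)) →
      (univ.filter fun p : V × V => g p.1 p.2 = true).card ≤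
        (univ.filter fun p : V × V => g' p.1 p.2 = true).card) :
    (∀ x y : V, g x y = true → (x ∈ C ∧ y ∉ C) ∨ (x ∉ C ∧ y ∈ C)) ∧
    (∀ x ∉ C, (univ.filter fun y => g x y = true) = T.inSet x ∩ C ∨
      (univ.filter fun y => g x y = true) = T.outSet x ∩ C) ∧
    (∀ x ∉ C, (univ.filter fun y => g x y = true).card
      = min (T.inSet x ∩ C).card (T.outSet x ∩ C).card) := by
  classical
  -- Part 1: bipartiteness
  have part1 : ∀ x y : V, g x y = true → (x ∈ C ∧ y ∉ C) ∨ (x ∉ C ∧ y ∈ C) := by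
    set g1 : V → V → Bool := fun a b =>
      if decide (a ∈ C) = decide (b ∈ C) then false else g a b with hg1
    have hg1s : ∀ a b, g1 a b = g1 b a := by
      intro a b
      show (if decide (a ∈ C) = decide (b ∈ C) then false else g a b)
        = (if decide (b ∈ C) = decide (a ∈ C) then false else g b a)
      by_cases hc : decide (a ∈ C) = decide (b ∈ C)
      · rw [if_pos hc, if_pos hc.symm]
      · rw [if_neg hc, if_neg (fun h => hc h.symm), hsymm a b]
    have hg1i : ∀ a, g1 a a = false := by intro a; simp [hg1]
    have hg1eq : ∀ a b, decide (a ∈ C) ≠ decide (b ∈ C) → g1 a b = g a b := by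
      intro a b h; simp [hg1, h]
    have hg1mod : ∀ x ∉ C, (∀ y ∈ C, T.flipRel g1 x y = true) ∨
        (∀ y ∈ C, T.flipRel g1 y x = true) := by
      intro x hx
      have key : ∀ y ∈ C, g1 x y = g x y ∧ g1 y x = g y x := by
        intro y hy
        have hne : decide (x ∈ C) ≠ decide (y ∈ C) := by simp [hx, hy]
        exact ⟨hg1eq x y hne, hg1eq y x fun h => hne h.symm⟩
      rcases hmod x hx with h | h
      · left; intro y hy
        have := h y hy
        rw [Tournament.flipRel, (key y hy).1]
        rwa [Tournament.flipRel] at this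
      · right; intro y hy
        have := h y hy
        rw [Tournament.flipRel, (key y hy).2]
        rwa [Tournament.flipRel] at this
    have hsub : (univ.filter fun p : V × V => g1 p.1 p.2 = true)
        ⊆ (univ.filter fun p : V × V => g p.1 p.2 = true) := by
      intro ⟨a, b⟩ hp
      simp only [mem_filter, mem_univ, true_and] at hp ⊢
      by_cases hc : decide (a ∈ C) = decide (b ∈ C)
      · simp [hg1, hc] at hp
      · rwa [hg1eq a b hc] at hp
    have heq : (univ.filter fun p : V × V => g1 p.1 p.2 = true)
        = (univ.filter fun p : V × V => g p.1 p.2 = true) :=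
      eq_of_subset_of_card_le hsub (hmin g1 hg1s hg1i hg1mod)
    intro x y hxy
    have hmem : (x, y) ∈ (univ.filter fun p : V × V => g1 p.1 p.2 = true) := by
      rw [heq]; simp [hxy]
    simp only [mem_filter, mem_univ, true_and] at hmem
    by_cases hc : decide (x ∈ C) = decide (y ∈ C)
    · simp [hg1, hc] at hmem
    · by_cases hx : x ∈ C
      · left
        refine ⟨hx, fun hy => hc ?_⟩
        simp [hx, hy]
      · right
        refine ⟨hx, ?_⟩
        by_contra hy
        exact hc (by simp [hx, hy])
  -- Part 2: neighborhoods
  have part2 : ∀ x ∉ C, (univ.filter fun y => g x y = true) = T.inSet x ∩ C ∨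
      (univ.filter fun y => g x y = true) = T.outSet x ∩ C := by
    intro x hx
    rcases hmod x hx with h | h
    · left
      ext y
      simp only [mem_filter, mem_univ, true_and, mem_inter, Tournament.inSet]
      constructor
      · intro hxy
        have hy : y ∈ C := by
          rcases part1 x y hxy with ⟨hx', _⟩ | ⟨_, hy⟩
          · exact absurd hx' hx
          · exact hy
        have := h y hy
        rw [Tournament.flipRel, hxy] at this
        have hyx : y ≠ x := fun hh => hx (hh ▸ hy)
        have htot := T.total x y (Ne.symm hyx)
        refine ⟨?_, hy⟩
        simp only [Bool.not_eq_true'] at this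
        rw [htot] at this
        simpa using this
      · rintro ⟨hr, hy⟩
        have := h y hy
        have hyx : y ≠ x := fun hh => hx (hh ▸ hy)
        have htot := T.total x y (Ne.symm hyx)
        rw [Tournament.flipRel] at this
        by_cases hg : g x y = true
        · exact hg
        · exfalso
          rw [if_neg hg] at this
          rw [htot, hr] at this
          simp at this
    · right
      ext y
      simp only [mem_filter, mem_univ, true_and, mem_inter, Tournament.outSet]
      constructor
      · intro hxy
        have hy : y ∈ C := by
          rcases part1 x y hxy with ⟨hx', _⟩ | ⟨_, hy⟩
          · exact absurd hx' hx
          · exact hy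
        have := h y hy
        rw [Tournament.flipRel, hsymm y x, hxy] at this
        have hyx : y ≠ x := fun hh => hx (hh ▸ hy)
        have htot := T.total y x hyx
        refine ⟨?_, hy⟩
        simp only [Bool.not_eq_true'] at this
        rw [htot] at this
        simpa using this
      · rintro ⟨hr, hy⟩
        have := h y hy
        have hyx : y ≠ x := fun hh => hx (hh ▸ hy)
        have htot := T.total y x hyx
        rw [Tournament.flipRel, hsymm y x] at this
        by_cases hg : g x y = true
        · exact hg
        · exfalso
          rw [if_neg hg] at this
          rw [htot, hr] at this
          simp at this
  refine ⟨part1, part2, ?_⟩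
  -- Part 3: degrees
  intro x hx
  rcases part2 x hx with h | h
  · rw [h]
    have hle : (univ.filter fun y => g x y = true).card ≤ (T.outSet x ∩ C).card := by
      refine key_le T C g hsymm hirr hmod hmin x hx _ inter_subset_right ?_
      left
      intro y hy
      simp [Tournament.outSet, hy]
    rw [h] at hle
    omega
  · rw [h]
    have hle : (univ.filter fun y => g x y = true).card ≤ (T.inSet x ∩ C).card := by
      refine key_le T C g hsymm hirr hmod hmin x hx _ inter_subset_right ?_
      right
      intro y hy
      have hyx : y ≠ x := fun hh => hx (hh ▸ hy)
      have htot := T.total y x hyx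
      simp only [Tournament.inSet, mem_inter, mem_filter, mem_univ, true_and]
      constructor
      · rintro ⟨hr, _⟩
        rw [htot] at hr
        simpa using hr
      · intro hr
        refine ⟨?_, hy⟩
        rw [htot, hr]
        rfl
    rw [h] at hle
    omega
end
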